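/- Let φ : ℝ → [0, +∞] be a lower semicontinuous convex function with φ(1) = 0 whose domain equals (0, +∞) or [0, +∞), let p ∈ M₁ with p_i > 0 for all i, let ε > 0, and for each i ∈ {1,…,N} let ℓ_i : ℝ^n → ℝ be convex. Define ψ : [0, +∞) × ℝ → ℝ ∪ {+∞} by ψ(λ, t) = λ φ*(t/λ) for λ > 0, and ψ(0, t) = 0 if t ≤ 0, ψ(0, t) = +∞ if t > 0. Then the function g : ℝ^n × ℝ × ℝ → ℝ ∪ {+∞} defined by g(θ, λ, μ) = λ ε + μ + Σ_{i=1}^N p_i ψ(λ, ℓ_i(θ) − μ) when λ ≥ 0, and g(θ, λ, μ) = +∞ when λ < 0, is proper, lower semicontinuous, and convex. -/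

import Mathlib

open scoped BigOperators
open Classical

/-- Fenchel conjugate of `φ : ℝ → [0,+∞]`: `φ*(s) = sup_t (s·t − φ(t))`, in `EReal`. -/
noncomputable def fconj (φ : ℝ → EReal) (s : ℝ) : EReal :=
  ⨆ t : ℝ, (((s * t : ℝ)) : EReal) - φ t

/-- `ψ(λ, t) = λ φ*(t/λ)` for `λ > 0`, and `ψ(0, t) = 0` if `t ≤ 0`, `+∞` if `t > 0`. -/
noncomputable def psiPersp (φ : ℝ → EReal) (l t : ℝ) : EReal :=
  if 0 < l then ((l : ℝ) : EReal) * fconj φ (t / l)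
  else if t ≤ 0 then 0 else ⊤

/-- The objective `g(θ, λ, μ) = λε + μ + Σ_i p_i ψ(λ, ℓ_i(θ) − μ)` for `λ ≥ 0`,
and `+∞` for `λ < 0`. -/
noncomputable def gBall {N n : ℕ} (φ : ℝ → EReal) (p : Fin N → ℝ) (ε : ℝ)
    (ℓ : Fin N → (Fin n → ℝ) → ℝ) (v : (Fin n → ℝ) × ℝ × ℝ) : EReal :=
  if 0 ≤ v.2.1 then
    (((v.2.1 * ε + v.2.2 : ℝ)) : EReal)
      + ∑ i, ((p i : ℝ) : EReal) * psiPersp φ v.2.1 (ℓ i v.1 - v.2.2)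
  else ⊤

/-!
Writing `φ*` as a supremum over the interior `(0, ∞)` of the domain of `φ` (the point `0` is
reached through the chord of `φ` from `0` to `1`), one gets
`ψ(λ, t) = sup_{x > 0} (x t - λ φ(x))` for every `λ ≥ 0`, including `λ = 0`. Summing and
exchanging the finite sum with the suprema, `g` is, on the closed half-space `λ ≥ 0`, the
supremum over `x ∈ (0, ∞)^N` of the continuous convex functions
`λ ε + μ + Σ_i p_i (x_i (ℓ_i(θ) - μ) - λ φ(x_i))`, and `+∞` off it. Such a function is lower
semicontinuous, convex and never `-∞`; it is finite at `(0, 0, max_i ℓ_i(0))`.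
-/

open Set Filter Topology

namespace EReal

theorem coe_finsetSum {ι : Type*} (s : Finset ι) (f : ι → ℝ) :
    ((∑ i ∈ s, f i : ℝ) : EReal) = ∑ i ∈ s, (f i : EReal) :=
  map_sum (⟨⟨((↑) : ℝ → EReal), coe_zero⟩, coe_add⟩ : ℝ →+ EReal) f s

theorem coe_add_iSup {ι : Sort*} (a : ℝ) (f : ι → EReal) :
    (a : EReal) + ⨆ i, f i = ⨆ i, (a : EReal) + f i :=
  Monotone.map_iSup_of_continuousAt (f := fun x => (a : EReal) + x)
    ((continuousAt_add (.inl (coe_ne_top a)) (.inl (coe_ne_bot a))).comp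
      (Continuous.prodMk_right (a : EReal)).continuousAt)
    (fun _ _ h => add_le_add_right h _) (add_bot _)

theorem coe_mul_iSup {ι : Sort*} {c : ℝ} (hc : 0 < c) (f : ι → EReal) :
    (c : EReal) * ⨆ i, f i = ⨆ i, (c : EReal) * f i :=
  have hc0 : (c : EReal) ≠ 0 := coe_ne_zero.2 hc.ne'
  Monotone.map_iSup_of_continuousAt (f := fun x => (c : EReal) * x)
    ((continuousAt_mul (.inl hc0) (.inl hc0)
      (.inl (coe_ne_bot c)) (.inl (coe_ne_top c))).comp
      (Continuous.prodMk_right (c : EReal)).continuousAt)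
    (fun _ _ h => mul_le_mul_of_nonneg_left h (by exact_mod_cast hc.le)) (coe_mul_bot_of_pos hc)

theorem finsetSum_iSup {ι κ : Type*} [Nonempty κ] (s : Finset ι) (u : ι → κ → EReal) :
    ∑ i ∈ s, ⨆ c, u i c = ⨆ x : ι → κ, ∑ i ∈ s, u i (x i) := by
  classical
  refine le_antisymm ?_ (iSup_le fun x => Finset.sum_le_sum fun i _ => le_iSup (u i) (x i))
  induction s using Finset.induction_on with
  | empty => simp
  | insert j s hj ih =>
    rw [Finset.sum_insert hj]
    refine add_le_of_forall_lt fun a ha b hb => ?_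
    obtain ⟨c, hc⟩ := lt_iSup_iff.1 ha
    obtain ⟨x, hx⟩ := lt_iSup_iff.1 (hb.trans_le ih)
    have hupdate : ∑ i ∈ insert j s, u i (Function.update x j c i)
        = u j c + ∑ i ∈ s, u i (x i) := by
      rw [Finset.sum_insert hj, Function.update_self]
      congr 1
      exact Finset.sum_congr rfl fun i hi => by
        rw [Function.update_of_ne (ne_of_mem_of_not_mem hi hj)]
    calc a + b ≤ u j c + ∑ i ∈ s, u i (x i) := add_le_add hc.le hx.le
      _ = ∑ i ∈ insert j s, u i (Function.update x j c i) := hupdate.symm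
      _ ≤ _ := le_iSup (fun y : ι → κ => ∑ i ∈ insert j s, u i (y i)) _

end EReal

theorem le_iSup_subtype_of_tendsto {α β : Type*} [CompleteLinearOrder α] [TopologicalSpace α]
    [OrderTopology α] {s : Set β} {f : β → α} {l : Filter β} [l.NeBot] {a : α}
    (hf : Tendsto f l (𝓝 a)) (hl : ∀ᶠ x in l, x ∈ s) : a ≤ ⨆ x : s, f x :=
  le_of_tendsto hf (hl.mono fun x hx => le_iSup (fun y : s => f y) ⟨x, hx⟩)

theorem iSup_Ioi_coe_mul (t : ℝ) :
    ⨆ x : Ioi (0 : ℝ), ((x * t : ℝ) : EReal) = if t ≤ 0 then 0 else ⊤ := by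
  split_ifs with ht
  · refine le_antisymm
      (iSup_le fun x => EReal.coe_nonpos.2 (mul_nonpos_of_nonneg_of_nonpos x.2.le ht)) ?_
    have h : Tendsto (fun x : ℝ => ((x * t : ℝ) : EReal)) (𝓝[>] 0) (𝓝 ((0 * t : ℝ) : EReal)) :=
      ((continuous_coe_real_ereal.comp (continuous_mul_const t)).tendsto 0).mono_left
        nhdsWithin_le_nhds
    rw [zero_mul, EReal.coe_zero] at h
    exact le_iSup_subtype_of_tendsto h self_mem_nhdsWithin
  · refine top_le_iff.1 (le_iSup_subtype_of_tendsto (f := fun x : ℝ => ((x * t : ℝ) : EReal)) ?_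
      (eventually_gt_atTop 0))
    exact EReal.tendsto_coe_nhds_top_iff.2 (tendsto_id.atTop_mul_const (not_le.1 ht))

section Conjugate

variable {φ : ℝ → EReal}

theorem neg_apply_zero_le_iSup_Ioi (hbot : ∀ t, φ t ≠ ⊥) (hpos : ∀ t, 0 < t → φ t ≠ ⊤)
    (hconv : ∀ t₁ t₂ : ℝ, ∀ u : ℝ, 0 < u → u < 1 →
      φ (u * t₁ + (1 - u) * t₂) ≤ (u : EReal) * φ t₁ + ((1 - u : ℝ) : EReal) * φ t₂)
    (s : ℝ) : -φ 0 ≤ ⨆ x : Ioi (0 : ℝ), ((s * x - (φ x).toReal : ℝ) : EReal) := by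
  by_cases h0 : φ 0 = ⊤
  · simp [h0]
  set c := (φ 0).toReal
  set c₁ := (φ 1).toReal
  have hφ0 : φ 0 = c := (EReal.coe_toReal h0 (hbot 0)).symm
  have hφ1 : φ 1 = c₁ := (EReal.coe_toReal (hpos 1 one_pos) (hbot 1)).symm
  -- `φ` lies below its chord on `(0, 1)`, and the chord tends to `φ 0` at `0`
  have hchord : ∀ x ∈ Ioo (0 : ℝ) 1, (φ x).toReal ≤ (1 - x) * c + x * c₁ := by
    rintro x ⟨hx0, hx1⟩
    have h := hconv 0 1 (1 - x) (by linarith) (by linarith)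
    rw [show (1 - x) * 0 + (1 - (1 - x)) * 1 = x by ring, hφ0, hφ1, ← EReal.coe_mul,
      ← EReal.coe_mul, ← EReal.coe_add, ← EReal.coe_toReal (hpos x hx0) (hbot x),
      EReal.coe_le_coe_iff] at h
    linarith
  have hlim : Tendsto (fun x : ℝ => ((s * x - ((1 - x) * c + x * c₁) : ℝ) : EReal)) (𝓝[>] 0)
      (𝓝 (-φ 0)) := by
    rw [hφ0, ← EReal.coe_neg]
    convert ((continuous_coe_real_ereal.comp (by fun_prop : Continuous fun x : ℝ =>
      s * x - ((1 - x) * c + x * c₁))).tendsto 0).mono_left nhdsWithin_le_nhds using 2 <;> simp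
  refine (le_iSup_subtype_of_tendsto hlim (Ioo_mem_nhdsGT one_pos)).trans
    (iSup_mono' fun x => ⟨⟨x, x.2.1⟩, ?_⟩)
  exact EReal.coe_le_coe_iff.2 (by linarith [hchord x x.2])

theorem fconj_eq_iSup_Ioi (hbot : ∀ t, φ t ≠ ⊥) (hneg : ∀ t < 0, φ t = ⊤)
    (hpos : ∀ t, 0 < t → φ t ≠ ⊤)
    (hconv : ∀ t₁ t₂ : ℝ, ∀ u : ℝ, 0 < u → u < 1 →
      φ (u * t₁ + (1 - u) * t₂) ≤ (u : EReal) * φ t₁ + ((1 - u : ℝ) : EReal) * φ t₂)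
    (s : ℝ) : fconj φ s = ⨆ x : Ioi (0 : ℝ), ((s * x - (φ x).toReal : ℝ) : EReal) := by
  have hcoe : ∀ x : Ioi (0 : ℝ),
      ((s * x - (φ x).toReal : ℝ) : EReal) = ((s * x : ℝ) : EReal) - φ x := fun x => by
    rw [EReal.coe_sub, EReal.coe_toReal (hpos x x.2) (hbot x)]
  refine le_antisymm (iSup_le fun t => ?_)
    (iSup_le fun x => (hcoe x).trans_le (le_iSup (fun t : ℝ => ((s * t : ℝ) : EReal) - φ t) x))
  rcases lt_trichotomy t 0 with ht | rfl | ht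
  · simp [hneg t ht]
  · simpa using neg_apply_zero_le_iSup_Ioi hbot hpos hconv s
  · exact (hcoe ⟨t, ht⟩).ge.trans (le_iSup
      (fun x : Ioi (0 : ℝ) => ((s * x - (φ x).toReal : ℝ) : EReal)) ⟨t, ht⟩)

theorem psiPersp_eq_iSup_Ioi (hbot : ∀ t, φ t ≠ ⊥) (hneg : ∀ t < 0, φ t = ⊤)
    (hpos : ∀ t, 0 < t → φ t ≠ ⊤)
    (hconv : ∀ t₁ t₂ : ℝ, ∀ u : ℝ, 0 < u → u < 1 →
      φ (u * t₁ + (1 - u) * t₂) ≤ (u : EReal) * φ t₁ + ((1 - u : ℝ) : EReal) * φ t₂)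
    {l : ℝ} (hl : 0 ≤ l) (t : ℝ) :
    psiPersp φ l t = ⨆ x : Ioi (0 : ℝ), ((x * t - l * (φ x).toReal : ℝ) : EReal) := by
  rcases hl.eq_or_lt with rfl | hl
  · simp only [zero_mul, sub_zero, iSup_Ioi_coe_mul]
    simp [psiPersp]
  · rw [psiPersp, if_pos hl, fconj_eq_iSup_Ioi hbot hneg hpos hconv, EReal.coe_mul_iSup hl]
    congr! 2 with x
    rw [← EReal.coe_mul]
    congr 1
    field_simp

end Conjugate

section SupOfConvex

variable {E ι : Type*} {K : Set E} {F : ι → E → ℝ} {g : E → EReal}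

theorem ne_bot_of_eqOn_iSup [Nonempty ι] (hg : EqOn g (fun v => ⨆ i, (F i v : EReal)) K)
    (hgK : ∀ v ∉ K, g v = ⊤) (v : E) : g v ≠ ⊥ := by
  by_cases hv : v ∈ K
  · rw [hg hv]
    exact ne_bot_of_gt ((EReal.bot_lt_coe _).trans_le (le_iSup (fun i => (F i v : EReal))
      (Classical.arbitrary ι)))
  · simp [hgK v hv]

theorem lowerSemicontinuous_of_eqOn_iSup [TopologicalSpace E] (hK : IsClosed K)
    (hF : ∀ i, Continuous (F i)) (hg : EqOn g (fun v => ⨆ i, (F i v : EReal)) K)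
    (hgK : ∀ v ∉ K, g v = ⊤) : LowerSemicontinuous g := by
  have hsup : LowerSemicontinuous fun v => ⨆ i, (F i v : EReal) :=
    lowerSemicontinuous_iSup fun i => (continuous_coe_real_ereal.comp (hF i)).lowerSemicontinuous
  have hle : ∀ v, ⨆ i, (F i v : EReal) ≤ g v := fun v => by
    by_cases hv : v ∈ K
    · exact (hg hv).ge
    · simp [hgK v hv]
  intro v y hy
  by_cases hv : v ∈ K
  · rw [hg hv] at hy
    exact (hsup v y hy).mono fun w hw => hw.trans_le (hle w)
  · filter_upwards [hK.isOpen_compl.mem_nhds hv] with w hw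
    rwa [hgK w hw, ← hgK v hv]

theorem convex_of_eqOn_iSup [AddCommMonoid E] [Module ℝ E] [Nonempty ι] (hK : Convex ℝ K)
    (hF : ∀ i, ConvexOn ℝ K (F i)) (hg : EqOn g (fun v => ⨆ i, (F i v : EReal)) K)
    (hgK : ∀ v ∉ K, g v = ⊤) (v w : E) {t : ℝ} (ht₀ : 0 < t) (ht₁ : t < 1) :
    g (t • v + (1 - t) • w) ≤ (t : EReal) * g v + ((1 - t : ℝ) : EReal) * g w := by
  have hbot := ne_bot_of_eqOn_iSup hg hgK
  have hmul_ne_bot : ∀ {c : ℝ}, 0 < c → ∀ v, (c : EReal) * g v ≠ ⊥ := fun hc v =>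
    (EReal.mul_ne_bot _ _).2 ⟨.inl (EReal.coe_ne_bot _), .inr (hbot v),
      .inl (EReal.coe_ne_top _), .inl (by exact_mod_cast hc.le)⟩
  have hs₀ : (0 : ℝ) < 1 - t := by linarith
  by_cases hv : v ∈ K; swap
  · rw [hgK v hv, EReal.coe_mul_top_of_pos ht₀, EReal.top_add_of_ne_bot (hmul_ne_bot hs₀ w)]
    exact le_top
  by_cases hw : w ∈ K; swap
  · rw [hgK w hw, EReal.coe_mul_top_of_pos hs₀, EReal.add_top_of_ne_bot (hmul_ne_bot ht₀ v)]
    exact le_top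
  rw [hg hv, hg hw, hg (hK hv hw ht₀.le hs₀.le (by ring))]
  refine iSup_le fun i => ?_
  calc (F i (t • v + (1 - t) • w) : EReal) ≤ ((t * F i v + (1 - t) * F i w : ℝ) : EReal) :=
        EReal.coe_le_coe_iff.2 ((hF i).2 hv hw ht₀.le hs₀.le (by ring))
    _ = (t : EReal) * F i v + ((1 - t : ℝ) : EReal) * F i w := by
        rw [EReal.coe_add, EReal.coe_mul, EReal.coe_mul]
    _ ≤ _ := by gcongr <;> exact le_iSup (fun i => (F i _ : EReal)) i

end SupOfConvex

section Lagrangian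

variable {N : ℕ} {E : Type*} (φ : ℝ → EReal) (p : Fin N → ℝ) (ε : ℝ) (ℓ : Fin N → E → ℝ)

-- The Lagrangian of `sup_q Σ_i q_i ℓ_i(θ)` subject to `Σ_i p_i φ(q_i / p_i) ≤ ε` and
-- `Σ_i q_i = 1`, in the ratios `x_i = q_i / p_i`, with multipliers `λ` and `μ`.
noncomputable def gBallLagrangian (x : Fin N → Ioi (0 : ℝ)) (v : E × ℝ × ℝ) : ℝ :=
  v.2.1 * ε + v.2.2 + ∑ i, p i * (x i * (ℓ i v.1 - v.2.2) - v.2.1 * (φ (x i)).toReal)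

variable {φ p ε ℓ}

theorem continuous_gBallLagrangian [TopologicalSpace E] (hℓ : ∀ i, Continuous (ℓ i))
    (x : Fin N → Ioi (0 : ℝ)) : Continuous (gBallLagrangian φ p ε ℓ x) := by
  unfold gBallLagrangian
  fun_prop

theorem convexOn_gBallLagrangian [AddCommGroup E] [Module ℝ E] (hp : ∀ i, 0 ≤ p i)
    (hℓ : ∀ i, ConvexOn ℝ univ (ℓ i)) (x : Fin N → Ioi (0 : ℝ)) :
    ConvexOn ℝ univ (gBallLagrangian φ p ε ℓ x) := by
  refine ⟨convex_univ, fun v _ w _ a b ha hb hab => ?_⟩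
  simp only [gBallLagrangian, Prod.fst_add, Prod.snd_add, Prod.smul_fst, Prod.smul_snd,
    smul_eq_mul]
  have hterm : ∀ i, p i * (x i * (ℓ i (a • v.1 + b • w.1) - (a * v.2.2 + b * w.2.2))
        - (a * v.2.1 + b * w.2.1) * (φ (x i)).toReal)
      ≤ a * (p i * (x i * (ℓ i v.1 - v.2.2) - v.2.1 * (φ (x i)).toReal))
        + b * (p i * (x i * (ℓ i w.1 - w.2.2) - w.2.1 * (φ (x i)).toReal)) := fun i => by
    have h := mul_le_mul_of_nonneg_left ((hℓ i).2 (mem_univ v.1) (mem_univ w.1) ha hb hab)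
      (mul_nonneg (hp i) (x i).2.le)
    simp only [smul_eq_mul] at h
    linear_combination h
  have hsum := Finset.sum_le_sum (s := Finset.univ) fun i _ => hterm i
  rw [Finset.sum_add_distrib, ← Finset.mul_sum, ← Finset.mul_sum] at hsum
  linear_combination hsum

theorem gBall_eq_iSup_gBallLagrangian {n : ℕ} {ℓ : Fin N → (Fin n → ℝ) → ℝ}
    (hbot : ∀ t, φ t ≠ ⊥) (hneg : ∀ t < 0, φ t = ⊤) (hpos : ∀ t, 0 < t → φ t ≠ ⊤)
    (hconv : ∀ t₁ t₂ : ℝ, ∀ u : ℝ, 0 < u → u < 1 →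
      φ (u * t₁ + (1 - u) * t₂) ≤ (u : EReal) * φ t₁ + ((1 - u : ℝ) : EReal) * φ t₂)
    (hp : ∀ i, 0 < p i) {v : (Fin n → ℝ) × ℝ × ℝ} (hv : 0 ≤ v.2.1) :
    gBall φ p ε ℓ v = ⨆ x, (gBallLagrangian φ p ε ℓ x v : EReal) := by
  rw [gBall, if_pos hv]
  simp_rw [psiPersp_eq_iSup_Ioi hbot hneg hpos hconv hv, EReal.coe_mul_iSup (hp _),
    ← EReal.coe_mul, EReal.finsetSum_iSup, EReal.coe_add_iSup, ← EReal.coe_finsetSum,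
    ← EReal.coe_add]
  rfl

end Lagrangian

theorem gBall_ne_top_of_le {N n : ℕ} (φ : ℝ → EReal) (p : Fin N → ℝ) (ε : ℝ)
    {ℓ : Fin N → (Fin n → ℝ) → ℝ} {θ : Fin n → ℝ} {μ : ℝ} (hμ : ∀ i, ℓ i θ ≤ μ) :
    gBall φ p ε ℓ (θ, 0, μ) ≠ ⊤ := by
  simp [gBall, psiPersp, hμ]

theorem stmt_13_general {N n : ℕ} (φ : ℝ → EReal)
    (hφpos : ∀ t, 0 ≤ φ t)
    (hφconv : ∀ t₁ t₂ : ℝ, ∀ u : ℝ, 0 < u → u < 1 →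
      φ (u * t₁ + (1 - u) * t₂) ≤ (u : EReal) * φ t₁ + ((1 - u : ℝ) : EReal) * φ t₂)
    (hφdom : {t : ℝ | φ t ≠ ⊤} = Set.Ioi (0 : ℝ) ∨ {t : ℝ | φ t ≠ ⊤} = Set.Ici (0 : ℝ))
    (p : Fin N → ℝ) (hppos : ∀ i, 0 < p i)
    (ε : ℝ)
    (ℓ : Fin N → (Fin n → ℝ) → ℝ)
    (hℓconv : ∀ i, ∀ θ₁ θ₂ : Fin n → ℝ, ∀ t : ℝ, 0 < t → t < 1 →
      ℓ i (t • θ₁ + (1 - t) • θ₂) ≤ t * ℓ i θ₁ + (1 - t) * ℓ i θ₂) :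
    (∀ v : (Fin n → ℝ) × ℝ × ℝ, gBall φ p ε ℓ v ≠ ⊥) ∧
    (∃ v : (Fin n → ℝ) × ℝ × ℝ, gBall φ p ε ℓ v ≠ ⊤) ∧
    LowerSemicontinuous (gBall φ p ε ℓ) ∧
    (∀ v w : (Fin n → ℝ) × ℝ × ℝ, ∀ t : ℝ, 0 < t → t < 1 →
      gBall φ p ε ℓ (t • v + (1 - t) • w)
        ≤ (t : EReal) * gBall φ p ε ℓ v + ((1 - t : ℝ) : EReal) * gBall φ p ε ℓ w) := by
  have hdom : {t | φ t ≠ ⊤} ⊆ Ici 0 ∧ Ioi 0 ⊆ {t | φ t ≠ ⊤} := by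
    rcases hφdom with h | h <;> rw [h]
    exacts [⟨Ioi_subset_Ici_self, subset_rfl⟩, ⟨subset_rfl, Ioi_subset_Ici_self⟩]
  have hneg : ∀ t < 0, φ t = ⊤ := fun t ht => by_contra fun h => not_le.2 ht (hdom.1 h)
  have hbot : ∀ t, φ t ≠ ⊥ := fun t => ne_bot_of_le_ne_bot (by simp) (hφpos t)
  have hℓ : ∀ i, ConvexOn ℝ univ (ℓ i) := fun i => convexOn_iff_forall_pos.2
    ⟨convex_univ, fun θ₁ _ θ₂ _ a b ha hb hab => by
      simpa [← eq_sub_of_add_eq' hab] using hℓconv i θ₁ θ₂ a ha (by linarith)⟩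
  set K : Set ((Fin n → ℝ) × ℝ × ℝ) := {v | 0 ≤ v.2.1}
  have hK : IsClosed K := isClosed_le continuous_const continuous_snd.fst
  have hKconv : Convex ℝ K :=
    fun v hv w hw a b ha hb _ => add_nonneg (mul_nonneg ha hv) (mul_nonneg hb hw)
  have hg : EqOn (gBall φ p ε ℓ) (fun v => ⨆ x, (gBallLagrangian φ p ε ℓ x v : EReal)) K :=
    fun v hv => gBall_eq_iSup_gBallLagrangian hbot hneg (fun t ht => hdom.2 ht) hφconv hppos hv
  have hgK : ∀ v ∉ K, gBall φ p ε ℓ v = ⊤ := fun v hv => if_neg hv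
  obtain ⟨μ, hμ⟩ := (finite_range fun i => ℓ i 0).bddAbove
  refine ⟨ne_bot_of_eqOn_iSup hg hgK,
    ⟨(0, 0, μ), gBall_ne_top_of_le φ p ε fun i => hμ (mem_range_self i)⟩,
    lowerSemicontinuous_of_eqOn_iSup hK (fun x => continuous_gBallLagrangian
      (fun i => continuousOn_univ.1 ((hℓ i).continuousOn isOpen_univ)) x) hg hgK,
    fun v w t => convex_of_eqOn_iSup hKconv (fun x => (convexOn_gBallLagrangian
      (fun i => (hppos i).le) hℓ x).subset (subset_univ _) hKconv) hg hgK v w⟩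

/-- for a lsc convex `φ : ℝ → [0,+∞]` with `φ(1) = 0` whose domain equals
`(0,+∞)` or `[0,+∞)`, `p ∈ M₁` with all `p_i > 0`, `ε > 0`, and convex real-valued
losses `ℓ_i : ℝ^n → ℝ`, the function `g(θ, λ, μ)` above is proper (never `−∞`, finite
somewhere), lower semicontinuous and convex. -/
theorem stmt_13 {N n : ℕ} (hN : 1 ≤ N) (hn : 1 ≤ n) (φ : ℝ → EReal)
    (hφpos : ∀ t, 0 ≤ φ t)
    (hφlsc : LowerSemicontinuous φ)
    (hφconv : ∀ t₁ t₂ : ℝ, ∀ u : ℝ, 0 < u → u < 1 →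
      φ (u * t₁ + (1 - u) * t₂) ≤ (u : EReal) * φ t₁ + ((1 - u : ℝ) : EReal) * φ t₂)
    (hφdom : {t : ℝ | φ t ≠ ⊤} = Set.Ioi (0 : ℝ) ∨ {t : ℝ | φ t ≠ ⊤} = Set.Ici (0 : ℝ))
    (hφ1 : φ 1 = 0)
    (p : Fin N → ℝ) (hp : p ∈ stdSimplex ℝ (Fin N)) (hppos : ∀ i, 0 < p i)
    (ε : ℝ) (hε : 0 < ε)
    (ℓ : Fin N → (Fin n → ℝ) → ℝ)
    (hℓconv : ∀ i, ∀ θ₁ θ₂ : Fin n → ℝ, ∀ t : ℝ, 0 < t → t < 1 →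
      ℓ i (t • θ₁ + (1 - t) • θ₂) ≤ t * ℓ i θ₁ + (1 - t) * ℓ i θ₂) :
    (∀ v : (Fin n → ℝ) × ℝ × ℝ, gBall φ p ε ℓ v ≠ ⊥) ∧
    (∃ v : (Fin n → ℝ) × ℝ × ℝ, gBall φ p ε ℓ v ≠ ⊤) ∧
    LowerSemicontinuous (gBall φ p ε ℓ) ∧
    (∀ v w : (Fin n → ℝ) × ℝ × ℝ, ∀ t : ℝ, 0 < t → t < 1 →
      gBall φ p ε ℓ (t • v + (1 - t) • w)
        ≤ (t : EReal) * gBall φ p ε ℓ v + ((1 - t : ℝ) : EReal) * gBall φ p ε ℓ w) :=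
  stmt_13_general φ hφpos hφconv hφdom p hppos ε ℓ hℓconv
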